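/- Let H and G be real Hilbert spaces, φ : 𝒳 → H and ψ : 𝒴 → G feature maps whose kernels k_φ(x,x') := ⟪φ(x),φ(x')⟫ and k_ψ(y,y') := ⟪ψ(y),ψ(y')⟫ satisfy 0 ≤ k_φ ≤ K and 0 ≤ k_ψ ≤ K for some K > 0. Then for any sample (x_1,y_1),…,(x_m,y_m) ∈ 𝒳 × 𝒴, the joint Rademacher average satisfies R̂_m(X,Y) ≤ K / m^{1/2}. -/

import Mathlib

open Finset

lemma psd_inner_sum {H : Type*} [NormedAddCommGroup H] [InnerProductSpace ℝ H]
    {m : ℕ} {R : Matrix (Fin m) (Fin m) ℝ} (hR : R.PosSemidef)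
    (v : Fin m → H) (c : Fin m → ℝ) :
    0 ≤ ∑ i, ∑ j, c i * c j * (R i j * (inner ℝ (v i) (v j) : ℝ)) := by
  obtain ⟨B, hB⟩ : ∃ B : Matrix (Fin m) (Fin m) ℝ, R = B.conjTranspose * B := by
    open scoped MatrixOrder in
    obtain ⟨B, hB⟩ := CStarAlgebra.nonneg_iff_eq_star_mul_self.mp hR.nonneg
    exact ⟨B, hB⟩
  have hRij : ∀ i j, R i j = ∑ k, B k i * B k j := by
    intro i j
    rw [hB]
    simp [Matrix.mul_apply, Matrix.conjTranspose_apply]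
  have expand : ∀ k : Fin m, (inner ℝ (∑ i, (c i * B k i) • v i) (∑ j, (c j * B k j) • v j) : ℝ)
      = ∑ i, ∑ j, (c i * B k i) * ((c j * B k j) * (inner ℝ (v i) (v j) : ℝ)) := by
    intro k
    rw [sum_inner]
    refine Finset.sum_congr rfl fun i _ => ?_
    rw [inner_sum]
    refine Finset.sum_congr rfl fun j _ => ?_
    rw [real_inner_smul_left, real_inner_smul_right]
  have key : ∑ i, ∑ j, c i * c j * (R i j * (inner ℝ (v i) (v j) : ℝ))
      = ∑ k, (inner ℝ (∑ i, (c i * B k i) • v i) (∑ j, (c j * B k j) • v j) : ℝ) := by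
    calc ∑ i, ∑ j, c i * c j * (R i j * (inner ℝ (v i) (v j) : ℝ))
        = ∑ i, ∑ j, ∑ k, (c i * B k i) * ((c j * B k j) * (inner ℝ (v i) (v j) : ℝ)) := by
          refine Finset.sum_congr rfl fun i _ => Finset.sum_congr rfl fun j _ => ?_
          rw [hRij, Finset.sum_mul, Finset.mul_sum]
          exact Finset.sum_congr rfl fun k _ => by ring
      _ = ∑ i, ∑ k, ∑ j, (c i * B k i) * ((c j * B k j) * (inner ℝ (v i) (v j) : ℝ)) :=
          Finset.sum_congr rfl fun i _ => Finset.sum_comm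
      _ = ∑ k, ∑ i, ∑ j, (c i * B k i) * ((c j * B k j) * (inner ℝ (v i) (v j) : ℝ)) :=
          Finset.sum_comm
      _ = ∑ k, (inner ℝ (∑ i, (c i * B k i) • v i) (∑ j, (c j * B k j) • v j) : ℝ) :=
          Finset.sum_congr rfl fun k _ => (expand k).symm
  rw [key]
  exact Finset.sum_nonneg fun k _ => real_inner_self_nonneg

lemma gram_sub_psd {G : Type*} [NormedAddCommGroup G] [InnerProductSpace ℝ G]
    {m : ℕ} (u : Fin m → G) (g : G) (hg : ‖g‖ ≤ 1) :
    (Matrix.of (fun i j => (inner ℝ (u i) (u j) : ℝ)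
      - (inner ℝ g (u i) : ℝ) * (inner ℝ g (u j) : ℝ))).PosSemidef := by
  refine Matrix.PosSemidef.of_dotProduct_mulVec_nonneg ?_ ?_
  · ext i j
    simp only [Matrix.conjTranspose_apply, Matrix.of_apply, star_trivial]
    rw [real_inner_comm (u i)]
    ring
  · intro c
    set w := ∑ i, c i • u i with hw
    have hww : (inner ℝ w w : ℝ) = ∑ i, ∑ j, c i * c j * (inner ℝ (u i) (u j) : ℝ) := by
      rw [hw, sum_inner]
      refine Finset.sum_congr rfl fun i _ => ?_
      rw [inner_sum]
      refine Finset.sum_congr rfl fun j _ => ?_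
      rw [real_inner_smul_left, real_inner_smul_right]
      ring
    have hgw : (inner ℝ g w : ℝ) = ∑ i, c i * (inner ℝ g (u i) : ℝ) := by
      rw [hw, inner_sum]
      exact Finset.sum_congr rfl fun i _ => real_inner_smul_right g (u i) (c i)
    have hquad : dotProduct (star c) (Matrix.mulVec (Matrix.of (fun i j =>
        (inner ℝ (u i) (u j) : ℝ) - (inner ℝ g (u i) : ℝ) * (inner ℝ g (u j) : ℝ))) c)
        = (inner ℝ w w : ℝ) - (inner ℝ g w : ℝ) * (inner ℝ g w : ℝ) := by
      rw [hww, hgw, Finset.sum_mul_sum]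
      simp only [dotProduct, Matrix.mulVec, dotProduct, Matrix.of_apply,
        star_trivial, Pi.star_apply, Finset.mul_sum, ← Finset.sum_sub_distrib]
      refine Finset.sum_congr rfl fun i _ => Finset.sum_congr rfl fun j _ => by ring
    rw [hquad]
    have h1 : (inner ℝ g w : ℝ) * (inner ℝ g w : ℝ) ≤ (inner ℝ g g : ℝ) * (inner ℝ w w : ℝ) :=
      real_inner_mul_inner_self_le g w
    have h2 : (inner ℝ g g : ℝ) ≤ 1 := by
      rw [real_inner_self_eq_norm_sq]
      nlinarith [norm_nonneg g]
    nlinarith [real_inner_self_nonneg (x := w)]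

lemma sum_sgn_mul_sgn {m : ℕ} (i j : Fin m) :
    ∑ ε : Fin m → Bool, ((if ε i then (1:ℝ) else -1) * (if ε j then (1:ℝ) else -1))
      = if i = j then (2:ℝ)^m else 0 := by
  rcases eq_or_ne i j with rfl | hij
  · rw [if_pos rfl]
    have h1 : ∀ ε : Fin m → Bool,
        ((if ε i then (1:ℝ) else -1) * (if ε i then (1:ℝ) else -1)) = 1 := by
      intro ε; by_cases h : ε i <;> simp [h]
    rw [Finset.sum_congr rfl fun ε _ => h1 ε, Finset.sum_const, Finset.card_univ]
    simp [Fintype.card_fun]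
  · rw [if_neg hij]
    have hinv : Function.Involutive (fun ε : Fin m → Bool => Function.update ε j (!ε j)) := by
      intro ε
      ext k
      rcases eq_or_ne k j with rfl | hk
      · simp
      · simp [Function.update_of_ne hk]
    have hsum := Equiv.sum_comp hinv.toPerm
      (fun ε : Fin m → Bool => ((if ε i then (1:ℝ) else -1) * (if ε j then (1:ℝ) else -1)))
    have hneg : ∀ ε : Fin m → Bool,
        ((if (Function.update ε j (!ε j)) i then (1:ℝ) else -1) *
          (if (Function.update ε j (!ε j)) j then (1:ℝ) else -1))
        = -((if ε i then (1:ℝ) else -1) * (if ε j then (1:ℝ) else -1)) := by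
      intro ε
      rw [Function.update_of_ne hij, Function.update_self]
      by_cases h : ε i <;> by_cases h' : ε j <;> simp [h, h']
    simp only [Function.Involutive.coe_toPerm] at hsum
    replace hsum : ∑ ε : Fin m → Bool, ((if (Function.update ε j (!ε j)) i then (1:ℝ) else -1) *
        (if (Function.update ε j (!ε j)) j then (1:ℝ) else -1))
        = ∑ ε : Fin m → Bool, ((if ε i then (1:ℝ) else -1) * (if ε j then (1:ℝ) else -1)) := hsum
    rw [Finset.sum_congr rfl fun ε _ => hneg ε, Finset.sum_neg_distrib] at hsum
    linarith

/-- The joint Rademacher average of the sample `(x 1, y 1), …, (x m, y m)` with respect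
to the feature maps `φ` and `ψ`: the average over all `2^m` sign vectors `σ` of
`sup_{‖f‖≤1, ‖g‖≤1} |(1/m) ∑ i, σ i * ⟪f, φ (x i)⟫ * ⟪g, ψ (y i)⟫|`. -/
noncomputable def jointRademacher {𝒳 𝒴 H G : Type*}
    [NormedAddCommGroup H] [InnerProductSpace ℝ H]
    [NormedAddCommGroup G] [InnerProductSpace ℝ G]
    (φ : 𝒳 → H) (ψ : 𝒴 → G) {m : ℕ} (x : Fin m → 𝒳) (y : Fin m → 𝒴) : ℝ :=
  (2 ^ m : ℝ)⁻¹ * ∑ ε : Fin m → Bool,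
    ⨆ fg : {f : H // ‖f‖ ≤ 1} × {g : G // ‖g‖ ≤ 1},
      |(1 / m : ℝ) * ∑ i, (if ε i then (1 : ℝ) else -1) *
        ((inner ℝ fg.1.1 (φ (x i)) : ℝ) * (inner ℝ fg.2.1 (ψ (y i)) : ℝ))|

/-- If the kernels `k_φ` and `k_ψ` take values in `[0, K]` with `K > 0`,
then the joint Rademacher average of any sample of size `m` is at most `K / √m`. -/
theorem jointRademacher_le_K_div_sqrt
    {𝒳 𝒴 H G : Type*}
    [NormedAddCommGroup H] [InnerProductSpace ℝ H]
    [NormedAddCommGroup G] [InnerProductSpace ℝ G]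
    (φ : 𝒳 → H) (ψ : 𝒴 → G) (K : ℝ) (hK : 0 < K)
    (hφ : ∀ x x' : 𝒳, (inner ℝ (φ x) (φ x') : ℝ) ∈ Set.Icc 0 K)
    (hψ : ∀ y y' : 𝒴, (inner ℝ (ψ y) (ψ y') : ℝ) ∈ Set.Icc 0 K)
    (m : ℕ) (hm : 0 < m) (x : Fin m → 𝒳) (y : Fin m → 𝒴) :
    jointRademacher φ ψ x y ≤ K / Real.sqrt m := by
  classical
  set s : (Fin m → Bool) → Fin m → ℝ := fun ε i => if ε i then (1:ℝ) else -1 with hs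
  set T : (Fin m → Bool) → ℝ := fun ε => ∑ i, ∑ j, s ε i * s ε j *
    ((inner ℝ (ψ (y i)) (ψ (y j)) : ℝ) * (inner ℝ (φ (x i)) (φ (x j)) : ℝ)) with hT
  -- T ε ≥ 0
  have hQpsd : (Matrix.of (fun i j => (inner ℝ (ψ (y i)) (ψ (y j)) : ℝ))).PosSemidef := by
    have := gram_sub_psd (fun i => ψ (y i)) (0 : G) (by simp)
    simpa using this
  have hTnonneg : ∀ ε, 0 ≤ T ε := fun ε =>
    psd_inner_sum hQpsd (fun i => φ (x i)) (fun i => s ε i)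
  -- pointwise bound of the supremum
  have hsup : ∀ ε : Fin m → Bool,
      (⨆ fg : {f : H // ‖f‖ ≤ 1} × {g : G // ‖g‖ ≤ 1},
        |(1 / m : ℝ) * ∑ i, s ε i *
          ((inner ℝ fg.1.1 (φ (x i)) : ℝ) * (inner ℝ fg.2.1 (ψ (y i)) : ℝ))|)
      ≤ (1 / m : ℝ) * Real.sqrt (T ε) := by
    intro ε
    haveI : Nonempty ({f : H // ‖f‖ ≤ 1} × {g : G // ‖g‖ ≤ 1}) :=
      ⟨⟨⟨0, by simp⟩, ⟨0, by simp⟩⟩⟩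
    refine ciSup_le fun fg => ?_
    obtain ⟨⟨f, hf⟩, ⟨g, hg⟩⟩ := fg
    set S : ℝ := ∑ i, s ε i * ((inner ℝ f (φ (x i)) : ℝ) * (inner ℝ g (ψ (y i)) : ℝ)) with hS
    have hSsq : S ^ 2 ≤ T ε := by
      set v : H := ∑ i, (s ε i * (inner ℝ g (ψ (y i)) : ℝ)) • φ (x i) with hv
      have hSv : S = (inner ℝ f v : ℝ) := by
        rw [hS, hv, inner_sum]
        refine Finset.sum_congr rfl fun i _ => ?_
        rw [real_inner_smul_right]
        ring
      have hvv : (inner ℝ v v : ℝ) = ∑ i, ∑ j,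
          (s ε i * (inner ℝ g (ψ (y i)) : ℝ)) * ((s ε j * (inner ℝ g (ψ (y j)) : ℝ)) *
            (inner ℝ (φ (x i)) (φ (x j)) : ℝ)) := by
        rw [hv, sum_inner]
        refine Finset.sum_congr rfl fun i _ => ?_
        rw [inner_sum]
        refine Finset.sum_congr rfl fun j _ => ?_
        rw [real_inner_smul_left, real_inner_smul_right]
      have h1 : S ^ 2 ≤ (inner ℝ v v : ℝ) := by
        have hcs : (inner ℝ f v : ℝ) * (inner ℝ f v : ℝ) ≤ (inner ℝ f f : ℝ) * (inner ℝ v v : ℝ) :=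
          real_inner_mul_inner_self_le f v
        have hff : (inner ℝ f f : ℝ) ≤ 1 := by
          rw [real_inner_self_eq_norm_sq]
          nlinarith [norm_nonneg f]
        have hvv0 : (0:ℝ) ≤ (inner ℝ v v : ℝ) := real_inner_self_nonneg
        rw [hSv]
        nlinarith
      have h2 : (inner ℝ v v : ℝ) ≤ T ε := by
        have hpsd := psd_inner_sum (gram_sub_psd (fun i => ψ (y i)) g hg)
          (fun i => φ (x i)) (fun i => s ε i)
        have heq : ∑ i, ∑ j, s ε i * s ε j *
            ((Matrix.of (fun i j => (inner ℝ (ψ (y i)) (ψ (y j)) : ℝ)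
              - (inner ℝ g (ψ (y i)) : ℝ) * (inner ℝ g (ψ (y j)) : ℝ))) i j *
              (inner ℝ (φ (x i)) (φ (x j)) : ℝ))
            = T ε - (inner ℝ v v : ℝ) := by
          rw [hvv, hT, ← Finset.sum_sub_distrib]
          refine Finset.sum_congr rfl fun i _ => ?_
          rw [← Finset.sum_sub_distrib]
          refine Finset.sum_congr rfl fun j _ => ?_
          simp only [Matrix.of_apply]
          ring
        rw [heq] at hpsd
        linarith
      linarith
    have habs : |S| ≤ Real.sqrt (T ε) := by
      have := Real.sqrt_le_sqrt hSsq
      rwa [Real.sqrt_sq_eq_abs] at this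
    rw [abs_mul]
    have hm1 : |(1 / m : ℝ)| = (1 / m : ℝ) := abs_of_nonneg (by positivity)
    rw [hm1]
    have : (0:ℝ) ≤ 1 / m := by positivity
    exact mul_le_mul_of_nonneg_left habs this
  -- sum of T over sign vectors
  have hsumT : ∑ ε : Fin m → Bool, T ε ≤ (2:ℝ)^m * (m * K^2) := by
    have hswap : ∑ ε : Fin m → Bool, T ε = ∑ i, ∑ j,
        (∑ ε : Fin m → Bool, s ε i * s ε j) *
          ((inner ℝ (ψ (y i)) (ψ (y j)) : ℝ) * (inner ℝ (φ (x i)) (φ (x j)) : ℝ)) := by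
      rw [hT]
      rw [Finset.sum_comm]
      refine Finset.sum_congr rfl fun i _ => ?_
      rw [Finset.sum_comm]
      refine Finset.sum_congr rfl fun j _ => ?_
      rw [Finset.sum_mul]
    rw [hswap]
    have hdiag : ∀ i j : Fin m, (∑ ε : Fin m → Bool, s ε i * s ε j)
        = if i = j then (2:ℝ)^m else 0 := fun i j => sum_sgn_mul_sgn i j
    calc ∑ i, ∑ j, (∑ ε : Fin m → Bool, s ε i * s ε j) *
          ((inner ℝ (ψ (y i)) (ψ (y j)) : ℝ) * (inner ℝ (φ (x i)) (φ (x j)) : ℝ))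
        = ∑ i, (2:ℝ)^m *
          ((inner ℝ (ψ (y i)) (ψ (y i)) : ℝ) * (inner ℝ (φ (x i)) (φ (x i)) : ℝ)) := by
          refine Finset.sum_congr rfl fun i _ => ?_
          rw [Finset.sum_congr rfl fun j _ => by rw [hdiag i j, ite_mul, zero_mul]]
          rw [Finset.sum_ite_eq]
          simp
      _ ≤ ∑ i : Fin m, (2:ℝ)^m * K^2 := by
          refine Finset.sum_le_sum fun i _ => ?_
          have h1 := hψ (y i) (y i)
          have h2 := hφ (x i) (x i)
          have : (inner ℝ (ψ (y i)) (ψ (y i)) : ℝ) * (inner ℝ (φ (x i)) (φ (x i)) : ℝ) ≤ K^2 := by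
            nlinarith [h1.1, h1.2, h2.1, h2.2]
          have h2m : (0:ℝ) ≤ (2:ℝ)^m := by positivity
          nlinarith
      _ = (2:ℝ)^m * (m * K^2) := by
          rw [Finset.sum_const, Finset.card_univ, Fintype.card_fin, nsmul_eq_mul]
          ring
  -- Cauchy–Schwarz over sign vectors
  have hsumsqrt : ∑ ε : Fin m → Bool, Real.sqrt (T ε)
      ≤ (2:ℝ)^m * K * Real.sqrt m := by
    have hcs := Finset.sum_mul_sq_le_sq_mul_sq Finset.univ
      (fun ε : Fin m → Bool => Real.sqrt (T ε)) (fun _ => (1:ℝ))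
    simp only [mul_one, one_pow, Finset.sum_const, Finset.card_univ, Fintype.card_fun,
      Fintype.card_bool, Fintype.card_fin, nsmul_eq_mul, Nat.cast_pow, Nat.cast_ofNat] at hcs
    have hsq : ∀ ε, Real.sqrt (T ε) ^ 2 = T ε := fun ε => Real.sq_sqrt (hTnonneg ε)
    rw [Finset.sum_congr rfl fun ε _ => hsq ε] at hcs
    have hbound : (∑ ε : Fin m → Bool, Real.sqrt (T ε)) ^ 2
        ≤ ((2:ℝ)^m * K * Real.sqrt m) ^ 2 := by
      have hmm : Real.sqrt m ^ 2 = (m:ℝ) := Real.sq_sqrt (Nat.cast_nonneg m)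
      have h2m : (0:ℝ) ≤ (2:ℝ)^m := by positivity
      calc (∑ ε : Fin m → Bool, Real.sqrt (T ε)) ^ 2
          ≤ (∑ ε : Fin m → Bool, T ε) * (2:ℝ)^m := hcs
        _ ≤ ((2:ℝ)^m * (m * K^2)) * (2:ℝ)^m :=
            mul_le_mul_of_nonneg_right hsumT h2m
        _ = ((2:ℝ)^m * K * Real.sqrt m) ^ 2 := by
            rw [mul_pow, mul_pow, hmm]; ring
    have hL : (0:ℝ) ≤ ∑ ε : Fin m → Bool, Real.sqrt (T ε) :=
      Finset.sum_nonneg fun ε _ => Real.sqrt_nonneg _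
    have hR : (0:ℝ) ≤ (2:ℝ)^m * K * Real.sqrt m := by positivity
    nlinarith
  -- assemble
  rw [jointRademacher]
  have hstep : ∑ ε : Fin m → Bool,
      (⨆ fg : {f : H // ‖f‖ ≤ 1} × {g : G // ‖g‖ ≤ 1},
        |(1 / m : ℝ) * ∑ i, (if ε i then (1 : ℝ) else -1) *
          ((inner ℝ fg.1.1 (φ (x i)) : ℝ) * (inner ℝ fg.2.1 (ψ (y i)) : ℝ))|)
      ≤ (1 / m : ℝ) * ((2:ℝ)^m * K * Real.sqrt m) := by
    calc ∑ ε : Fin m → Bool,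
        (⨆ fg : {f : H // ‖f‖ ≤ 1} × {g : G // ‖g‖ ≤ 1},
          |(1 / m : ℝ) * ∑ i, (if ε i then (1 : ℝ) else -1) *
            ((inner ℝ fg.1.1 (φ (x i)) : ℝ) * (inner ℝ fg.2.1 (ψ (y i)) : ℝ))|)
        ≤ ∑ ε : Fin m → Bool, (1 / m : ℝ) * Real.sqrt (T ε) :=
          Finset.sum_le_sum fun ε _ => hsup ε
      _ = (1 / m : ℝ) * ∑ ε : Fin m → Bool, Real.sqrt (T ε) := by
          rw [Finset.mul_sum]
      _ ≤ (1 / m : ℝ) * ((2:ℝ)^m * K * Real.sqrt m) := by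
          have : (0:ℝ) ≤ 1 / m := by positivity
          exact mul_le_mul_of_nonneg_left hsumsqrt this
  have h2m : (0:ℝ) < (2:ℝ)^m := by positivity
  have hmain : ((2:ℝ)^m)⁻¹ * ((1 / m : ℝ) * ((2:ℝ)^m * K * Real.sqrt m))
      = K / Real.sqrt m := by
    have hmpos : (0:ℝ) < m := by exact_mod_cast hm
    have hsmpos : (0:ℝ) < Real.sqrt m := Real.sqrt_pos.mpr hmpos
    have hmul : Real.sqrt m * Real.sqrt m = (m:ℝ) := Real.mul_self_sqrt (Nat.cast_nonneg m)
    have key : K / Real.sqrt m = K * Real.sqrt m / m := by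
      rw [div_eq_div_iff hsmpos.ne' hmpos.ne', mul_assoc, hmul]
    rw [key]
    field_simp
  calc (2 ^ m : ℝ)⁻¹ * ∑ ε : Fin m → Bool,
      (⨆ fg : {f : H // ‖f‖ ≤ 1} × {g : G // ‖g‖ ≤ 1},
        |(1 / m : ℝ) * ∑ i, (if ε i then (1 : ℝ) else -1) *
          ((inner ℝ fg.1.1 (φ (x i)) : ℝ) * (inner ℝ fg.2.1 (ψ (y i)) : ℝ))|)
      ≤ (2 ^ m : ℝ)⁻¹ * ((1 / m : ℝ) * ((2:ℝ)^m * K * Real.sqrt m)) :=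
        mul_le_mul_of_nonneg_left hstep (by positivity)
    _ = K / Real.sqrt m := hmain
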